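/- arXiv:2106.07621 — 9 statements merged into one kernel-verified Lean document; each statement's English description precedes it below -/
import Mathlib

section
/- Let f be a polynomial with rational coefficients of degree d. Then for every nonzero rational x and every rational n, writing g(t) = f(x·t), one has S_f(n) = x·S_g(n/x) + ∑_{r=1}^{d+1} (F_r(x)/r!) · (Δ_x^{r-1} f(n) − Δ_x^{r-1} f(0)) / x^{r-1}. (All terms with r > d+1 vanish since the iterated differences of f of order exceeding d are zero.) -/
/-!
Write `δ = Δ_x / x`. On polynomials `δ` is locally nilpotent, so every formal power series `φ`
acts through a finite truncation, multiplicatively in `φ`. Newton's forward-difference formula,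
extended from integer to rational step multiples, gives `Δ_1 = (1 + xδ)^{1/x} - 1 = D(δ)·δ`.
The right-hand side `T(t)` of the formula satisfies `T(0) = 0` and `δT = G(δ) f`, because
`Δ_x` of `x·S_g(t/x)` is `x f`; hence `Δ_1 T = D(δ) G(δ) f = f`, and `T = S_f` since a
polynomial is determined by `Δ_1` and its value at `0`.
-/

/-- The power series `D(z) = ∑_{r≥0} d_r z^r` over `ℚ[x]` with
`d_r = (∏_{j=1}^{r} (1 - j·x))/(r+1)!`, i.e. the power series of `((1+xz)^{1/x} - 1)/z`. -/
noncomputable def Dser : PowerSeries (Polynomial ℚ) :=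
  PowerSeries.mk fun r =>
    Polynomial.C ((1 : ℚ) / (Nat.factorial (r + 1))) *
      ∏ j ∈ Finset.range r, (1 - Polynomial.C ((j : ℚ) + 1) * Polynomial.X)

/-- The exponential generating function `∑_{r≥0} (F_r/r!) z^r` of a sequence of polynomials. -/
noncomputable def egf (F : ℕ → Polynomial ℚ) : PowerSeries (Polynomial ℚ) :=
  PowerSeries.mk fun r => Polynomial.C ((1 : ℚ) / (Nat.factorial r)) * F r

/-- The forward difference operator with step size `x`: `Δ_x f(t) = f(t+x) - f(t)`. -/
noncomputable def fdiff (x : ℚ) (p : Polynomial ℚ) : Polynomial ℚ :=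
  p.comp (Polynomial.X + Polynomial.C x) - p

open Polynomial Finset
open scoped PowerSeries

section SeriesApply

variable {R M : Type*} [CommRing R] [AddCommGroup M] [Module R M]

/-- `φ(f) m`, computed from the truncation of `φ` below degree `N`; this does not depend on `N`
once `(f ^ N) m = 0`. -/
noncomputable def seriesApply (f : Module.End R M) (φ : R⟦X⟧) (N : ℕ) (m : M) : M :=
  aeval f (PowerSeries.trunc N φ) m

variable {f : Module.End R M} {N : ℕ} {m : M}

lemma X_pow_dvd_sub_trunc_coe (P : R[X]) (N : ℕ) :
    (X : R[X]) ^ N ∣ P - PowerSeries.trunc N (P : R⟦X⟧) := by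
  rw [X_pow_dvd_iff]
  intro k hk
  rw [coeff_sub, PowerSeries.coeff_trunc, if_pos hk, coeff_coe, sub_self]

lemma aeval_apply_eq_of_X_pow_dvd_sub (hm : (f ^ N) m = 0) {P Q : R[X]} (h : X ^ N ∣ P - Q) :
    aeval f P m = aeval f Q m := by
  obtain ⟨U, hU⟩ := h
  rw [sub_eq_iff_eq_add'.mp hU, map_add, mul_comm, map_mul, aeval_X_pow, LinearMap.add_apply,
    Module.End.mul_apply, hm, map_zero, add_zero]

lemma seriesApply_coe (hm : (f ^ N) m = 0) (P : R[X]) : seriesApply f P N m = aeval f P m :=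
  (aeval_apply_eq_of_X_pow_dvd_sub hm (X_pow_dvd_sub_trunc_coe P N)).symm

lemma seriesApply_of_le (hm : (f ^ N) m = 0) {N' : ℕ} (hN : N ≤ N') (φ : R⟦X⟧) :
    seriesApply f φ N' m = seriesApply f φ N m := by
  rw [seriesApply, seriesApply, ← PowerSeries.trunc_trunc_of_le φ hN]
  exact aeval_apply_eq_of_X_pow_dvd_sub hm (X_pow_dvd_sub_trunc_coe _ N)

lemma seriesApply_mul (hm : (f ^ N) m = 0) (φ ψ : R⟦X⟧) :
    seriesApply f (φ * ψ) N m = seriesApply f φ N (seriesApply f ψ N m) := by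
  rw [seriesApply, seriesApply, seriesApply, ← Module.End.mul_apply, ← map_mul,
    ← PowerSeries.trunc_trunc_mul_trunc, ← Polynomial.coe_mul]
  exact (aeval_apply_eq_of_X_pow_dvd_sub hm (X_pow_dvd_sub_trunc_coe _ N)).symm

lemma seriesApply_add (φ ψ : R⟦X⟧) :
    seriesApply f (φ + ψ) N m = seriesApply f φ N m + seriesApply f ψ N m := by
  simp only [seriesApply, map_add, LinearMap.add_apply]

lemma seriesApply_eq_sum (φ : R⟦X⟧) :
    seriesApply f φ N m = ∑ k ∈ range N, PowerSeries.coeff k φ • (f ^ k) m := by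
  rw [seriesApply, aeval_def, PowerSeries.eval₂_trunc_eq_sum_range, LinearMap.sum_apply]
  simp only [Module.End.mul_apply, Module.algebraMap_end_apply]

lemma seriesApply_smul_left (a : R) (φ : R⟦X⟧) :
    seriesApply (a • f) φ N m = seriesApply f (PowerSeries.rescale a φ) N m := by
  simp only [seriesApply_eq_sum, PowerSeries.coeff_rescale, _root_.smul_pow,
    LinearMap.smul_apply, smul_smul, mul_comm]

lemma apply_seriesApply (φ : R⟦X⟧) : f (seriesApply f φ N m) = seriesApply f φ N (f m) := by
  simp only [seriesApply_eq_sum, map_sum, map_smul, ← Module.End.mul_apply, ← pow_succ,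
    ← pow_succ']

end SeriesApply

noncomputable def fdiffₗ (x : ℚ) : Module.End ℚ ℚ[X] := taylor x - 1

lemma fdiffₗ_apply (x : ℚ) (p : ℚ[X]) : fdiffₗ x p = fdiff x p := rfl

lemma fdiffₗ_pow_apply (x : ℚ) (k : ℕ) (p : ℚ[X]) : (fdiffₗ x ^ k) p = (fdiff x)^[k] p := by
  rw [Module.End.coe_pow]; rfl

lemma natDegree_fdiff_le (x : ℚ) (p : ℚ[X]) : (fdiff x p).natDegree ≤ p.natDegree - 1 := by
  rw [natDegree_le_iff_coeff_eq_zero]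
  intro k hk
  rw [fdiff, ← taylor_apply, coeff_sub]
  rcases (show p.natDegree ≤ k by omega).eq_or_lt with rfl | hlt
  · rw [coeff_natDegree, ← leadingCoeff_taylor x p, leadingCoeff, natDegree_taylor, sub_self]
  · rw [coeff_eq_zero_of_natDegree_lt ((natDegree_taylor p x).symm ▸ hlt),
      coeff_eq_zero_of_natDegree_lt hlt, sub_self]

lemma fdiffₗ_pow_apply_eq_zero (x : ℚ) {p : ℚ[X]} {N : ℕ} (hN : p.natDegree < N) :
    (fdiffₗ x ^ N) p = 0 := by
  have hdeg : ∀ k, ((fdiffₗ x ^ k) p).natDegree ≤ p.natDegree - k := by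
    intro k
    induction k with
    | zero => simp
    | succ k ih =>
      rw [pow_succ', Module.End.mul_apply, fdiffₗ_apply]
      exact (natDegree_fdiff_le x _).trans (by omega)
  obtain ⟨j, rfl⟩ := Nat.exists_eq_add_of_lt hN
  rw [show p.natDegree + j + 1 = j + (p.natDegree + 1) by ring, pow_add, Module.End.mul_apply,
    pow_succ', Module.End.mul_apply,
    eq_C_of_natDegree_le_zero ((hdeg _).trans (Nat.sub_self _).le), fdiffₗ_apply, fdiff]
  simp

lemma fdiff_comp_C_mul_X (a y : ℚ) (p : ℚ[X]) :
    fdiff y (p.comp (C a * X)) = (fdiff (a * y) p).comp (C a * X) := by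
  simp only [fdiff, sub_comp, comp_assoc, mul_comp, C_comp, X_comp, add_comp, mul_add, C_mul]

lemma eq_of_fdiff_one_eq {P Q : ℚ[X]} (h : fdiff 1 P = fdiff 1 Q) (h0 : P.eval 0 = Q.eval 0) :
    P = Q := by
  have hnat : ∀ n : ℕ, P.eval (n : ℚ) = Q.eval (n : ℚ) := by
    intro n
    induction n with
    | zero => simpa using h0
    | succ n ih =>
      have := congrArg (eval (n : ℚ)) h
      simp only [fdiff, eval_sub, eval_comp, eval_add, eval_X, eval_C, ih, sub_left_inj] at this
      exact_mod_cast this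
  exact eq_of_infinite_eval_eq P Q (Set.infinite_of_injective_forall_mem Nat.cast_injective hnat)

lemma taylor_natCast_mul_eq_seriesApply (x : ℚ) {p : ℚ[X]} {N : ℕ} (hN : p.natDegree < N)
    (n : ℕ) :
    taylor (n * x) p = seriesApply (fdiffₗ x) (PowerSeries.binomialSeries ℚ (n : ℚ)) N p := by
  have htaylor : ∀ n : ℕ, taylor (n * x) p = (taylor x ^ n) p := by
    intro n
    induction n with
    | zero => simp
    | succ n ih =>
      rw [pow_succ', Module.End.mul_apply, ← ih, taylor_taylor]
      push_cast
      ring_nf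
  rw [PowerSeries.binomialSeries_nat, ← Polynomial.coe_X, ← Polynomial.coe_one,
    ← Polynomial.coe_add, ← Polynomial.coe_pow, seriesApply_coe (fdiffₗ_pow_apply_eq_zero x hN),
    htaylor, map_pow, map_add, map_one, aeval_X, fdiffₗ, add_sub_cancel]

lemma taylor_mul_eq_seriesApply (x t : ℚ) {p : ℚ[X]} {N : ℕ} (hN : p.natDegree < N) :
    taylor (t * x) p = seriesApply (fdiffₗ x) (PowerSeries.binomialSeries ℚ t) N p := by
  refine Polynomial.funext fun y => ?_
  -- at fixed `y`, both sides are polynomial functions of `t` which agree on `ℕ`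
  let lhs : ℚ[X] := p.comp (C y + X * C x)
  let rhs : ℚ[X] := ∑ k ∈ range N, C (((fdiffₗ x ^ k) p).eval y) * Ring.choose X k
  have hlhs : ∀ s, lhs.eval s = (taylor (s * x) p).eval y := by
    intro s
    simp only [lhs, eval_comp, eval_add, eval_mul, eval_C, eval_X, taylor_eval]
  have hrhs : ∀ s, rhs.eval s =
      (seriesApply (fdiffₗ x) (PowerSeries.binomialSeries ℚ s) N p).eval y := by
    intro s
    have hchoose : ∀ k, (Ring.choose (X : ℚ[X]) k).eval s = Ring.choose s k := fun k => by
      simpa using Ring.map_choose (evalRingHom s) X k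
    simp only [rhs, seriesApply_eq_sum, PowerSeries.binomialSeries_coeff, eval_finsetSum,
      eval_mul, eval_C, eval_smul, smul_eq_mul, one_mul, hchoose, mul_comm]
  have : lhs = rhs := eq_of_infinite_eval_eq lhs rhs <|
    Set.infinite_of_injective_forall_mem Nat.cast_injective fun n : ℕ => by
      simp only [Set.mem_ofPred_eq, hlhs, hrhs, taylor_natCast_mul_eq_seriesApply x hN n]
  rw [← hlhs, ← hrhs, this]

lemma Ring.choose_eq_descPochhammer_eval_div (t : ℚ) (k : ℕ) :
    Ring.choose t k = (descPochhammer ℚ k).eval t / k.factorial := by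
  rw [Ring.choose_eq_smul, ← aeval_eq_smeval, aeval_def, eval₂_eq_eval_map, descPochhammer_map,
    smul_eq_mul, inv_mul_eq_div]

-- `(1 + x z) ^ (1 / x) = 1 + z D(z)`, with `D` evaluated at `x`
lemma rescale_binomialSeries_inv {x : ℚ} (hx : x ≠ 0) :
    PowerSeries.rescale x (PowerSeries.binomialSeries ℚ x⁻¹) =
      1 + PowerSeries.X * Dser.map (evalRingHom x) := by
  ext (_ | s)
  · simp
  · have hprod : x ^ (s + 1) * ∏ j ∈ range (s + 1), (x⁻¹ - j) =
        ∏ j ∈ range s, (1 - ((j : ℚ) + 1) * x) := by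
      rw [prod_range_succ', pow_succ, mul_mul_mul_comm,
        show x ^ s = x ^ #(range s) by rw [card_range], pow_card_mul_prod, Nat.cast_zero,
        sub_zero, mul_inv_cancel₀ hx, mul_one]
      refine prod_congr rfl fun j _ => ?_
      rw [mul_sub, mul_inv_cancel₀ hx]
      push_cast
      ring
    rw [PowerSeries.coeff_rescale, PowerSeries.binomialSeries_coeff, map_add,
      PowerSeries.coeff_one, if_neg s.succ_ne_zero, zero_add, PowerSeries.coeff_succ_X_mul,
      PowerSeries.coeff_map, Dser, PowerSeries.coeff_mk, smul_eq_mul, mul_one,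
      Ring.choose_eq_descPochhammer_eval_div, descPochhammer_eval_eq_prod_range]
    simp only [coe_evalRingHom, eval_mul, eval_C, eval_prod, eval_sub, eval_one, eval_X]
    rw [← hprod]
    field_simp

noncomputable def diffQuot (x : ℚ) : Module.End ℚ ℚ[X] := x⁻¹ • fdiffₗ x

lemma diffQuot_pow_apply (x : ℚ) (k : ℕ) (p : ℚ[X]) :
    (diffQuot x ^ k) p = (x ^ k)⁻¹ • (fdiff x)^[k] p := by
  rw [diffQuot, _root_.smul_pow, LinearMap.smul_apply, fdiffₗ_pow_apply, inv_pow]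

lemma diffQuot_pow_apply_eq_zero (x : ℚ) {p : ℚ[X]} {N : ℕ} (hN : p.natDegree < N) :
    (diffQuot x ^ N) p = 0 := by
  rw [diffQuot, _root_.smul_pow, LinearMap.smul_apply, fdiffₗ_pow_apply_eq_zero x hN, smul_zero]

lemma diffQuot_C (x a : ℚ) : diffQuot x (C a) = 0 := by
  rw [diffQuot, LinearMap.smul_apply, fdiffₗ_apply, fdiff, C_comp, sub_self, smul_zero]

lemma diffQuot_smul_comp_C_inv_mul_X {x : ℚ} (hx : x ≠ 0) (P : ℚ[X]) :
    diffQuot x (x • P.comp (C x⁻¹ * X)) = (fdiff 1 P).comp (C x⁻¹ * X) := by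
  rw [diffQuot, LinearMap.smul_apply, map_smul, smul_smul, inv_mul_cancel₀ hx, one_smul,
    fdiffₗ_apply, fdiff_comp_C_mul_X, inv_mul_cancel₀ hx]

lemma eval_seriesApply_diffQuot (x : ℚ) (φ : ℚ⟦X⟧) (N : ℕ) (p : ℚ[X]) (y : ℚ) :
    (seriesApply (diffQuot x) φ N p).eval y =
      ∑ k ∈ range N, PowerSeries.coeff k φ * ((fdiff x)^[k] p).eval y / x ^ k := by
  simp only [seriesApply_eq_sum, diffQuot_pow_apply, eval_finsetSum, eval_smul, smul_eq_mul,
    div_eq_mul_inv, mul_comm, mul_assoc]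

lemma fdiff_one_eq_seriesApply_diffQuot {x : ℚ} (hx : x ≠ 0) {p : ℚ[X]} {N : ℕ}
    (hN : p.natDegree < N) :
    fdiff 1 p = seriesApply (diffQuot x) (Dser.map (evalRingHom x) * PowerSeries.X) N p := by
  have hfdiffₗ : fdiffₗ x = x • diffQuot x := by
    rw [diffQuot, smul_smul, mul_inv_cancel₀ hx, one_smul]
  calc fdiff 1 p = taylor (x⁻¹ * x) p - p := by rw [inv_mul_cancel₀ hx, taylor_apply, C_1]; rfl
    _ = seriesApply (diffQuot x) (1 + PowerSeries.X * Dser.map (evalRingHom x)) N p - p := by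
      rw [taylor_mul_eq_seriesApply x x⁻¹ hN, hfdiffₗ, seriesApply_smul_left,
        rescale_binomialSeries_inv hx]
    _ = _ := by
      rw [seriesApply_add, ← Polynomial.coe_one,
        seriesApply_coe (diffQuot_pow_apply_eq_zero x hN), map_one, Module.End.one_apply,
        add_sub_cancel_left, mul_comm]

lemma fdiff_one_eq_of_diffQuot_eq {x : ℚ} (hx : x ≠ 0) {φ : ℚ⟦X⟧}
    (hφ : Dser.map (evalRingHom x) * φ = 1) {T f : ℚ[X]} {N : ℕ} (hT : T.natDegree < N)
    (hf : f.natDegree < N) (h : diffQuot x T = seriesApply (diffQuot x) φ N f) :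
    fdiff 1 T = f := by
  have hTN := diffQuot_pow_apply_eq_zero x hT
  have hfN := diffQuot_pow_apply_eq_zero x hf
  rw [fdiff_one_eq_seriesApply_diffQuot hx hT, seriesApply_mul hTN, ← Polynomial.coe_X,
    seriesApply_coe hTN, aeval_X, h, ← seriesApply_mul hfN, hφ, ← Polynomial.coe_one,
    seriesApply_coe hfN, map_one, Module.End.one_apply]

noncomputable def tailSum (x : ℚ) (φ : ℚ⟦X⟧) (f : ℚ[X]) : ℚ[X] :=
  seriesApply (diffQuot x) (PowerSeries.mk fun k => PowerSeries.coeff (k + 1) φ)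
    (f.natDegree + 1) f

noncomputable def summationRhs (x : ℚ) (φ : ℚ⟦X⟧) (f Sg : ℚ[X]) : ℚ[X] :=
  x • Sg.comp (C x⁻¹ * X) + (tailSum x φ f - C ((tailSum x φ f).eval 0))

lemma eval_summationRhs (x : ℚ) (φ : ℚ⟦X⟧) (f Sg : ℚ[X]) (t : ℚ) :
    (summationRhs x φ f Sg).eval t = x * Sg.eval (x⁻¹ * t) +
      ∑ k ∈ range (f.natDegree + 1), PowerSeries.coeff (k + 1) φ *
        (((fdiff x)^[k] f).eval t - ((fdiff x)^[k] f).eval 0) / x ^ k := by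
  simp only [summationRhs, tailSum, eval_add, eval_sub, eval_smul, eval_comp, eval_mul, eval_C,
    eval_X, smul_eq_mul, eval_seriesApply_diffQuot, PowerSeries.coeff_mk, add_right_inj]
  rw [← sum_sub_distrib]
  refine sum_congr rfl fun k _ => by ring

lemma eval_summationRhs_zero (x : ℚ) (φ : ℚ⟦X⟧) (f : ℚ[X]) {Sg : ℚ[X]} (hSg0 : Sg.eval 0 = 0) :
    (summationRhs x φ f Sg).eval 0 = 0 := by
  simp [summationRhs, hSg0]

lemma diffQuot_summationRhs {x : ℚ} (hx : x ≠ 0) {φ : ℚ⟦X⟧}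
    (hφ : PowerSeries.constantCoeff φ = 1) {f Sg : ℚ[X]} (hSg : fdiff 1 Sg = f.comp (C x * X))
    {N : ℕ} (hN : f.natDegree < N) :
    diffQuot x (summationRhs x φ f Sg) = seriesApply (diffQuot x) φ N f := by
  have hfN := diffQuot_pow_apply_eq_zero x hN
  have htail : diffQuot x (tailSum x φ f) =
      seriesApply (diffQuot x)
        (PowerSeries.X * PowerSeries.mk fun k => PowerSeries.coeff (k + 1) φ) N f := by
    rw [tailSum, ← seriesApply_of_le (diffQuot_pow_apply_eq_zero x (Nat.lt_succ_self _)) hN,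
      apply_seriesApply, mul_comm, seriesApply_mul hfN, ← Polynomial.coe_X, seriesApply_coe hfN,
      aeval_X]
  conv_rhs => rw [PowerSeries.eq_X_mul_shift_add_const φ, hφ, map_one]
  rw [summationRhs, map_add, map_sub, diffQuot_smul_comp_C_inv_mul_X hx, hSg, comp_assoc,
    mul_comp, C_comp, X_comp, ← mul_assoc, ← C_mul, mul_inv_cancel₀ hx, C_1, one_mul, comp_X,
    htail, diffQuot_C, sub_zero, seriesApply_add, ← Polynomial.coe_one, seriesApply_coe hfN,
    map_one, Module.End.one_apply, add_comm]

/-- **Generalized summation formula** (Theorem 2.1): for a polynomial `f` of degree `d`,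
`∑_{k=0}^{n-1} f(k) = x ∑_{k=0}^{n/x-1} f(kx)
  + ∑_{r=1}^{d+1} (F_r(x)/r!) (Δ_x^{r-1} f(n) - Δ_x^{r-1} f(0)) / x^{r-1}`,
where `S` is the fractional sum of `f`, `Sg` is the fractional sum of `g(t) = f(x·t)`,
and `F_r` is the unique sequence of polynomials with `(∑ (F_r/r!) z^r) · D(z) = 1`. -/
theorem generalized_summation_formula
    (F : ℕ → Polynomial ℚ) (hF : egf F * Dser = 1)
    (f : Polynomial ℚ) (d : ℕ) (hd : f.natDegree = d)
    (x : ℚ) (hx : x ≠ 0) (n : ℚ)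
    (S : Polynomial ℚ) (hS0 : S.eval 0 = 0)
    (hS : S.comp (Polynomial.X + 1) - S = f)
    (Sg : Polynomial ℚ) (hSg0 : Sg.eval 0 = 0)
    (hSg : Sg.comp (Polynomial.X + 1) - Sg = f.comp (Polynomial.C x * Polynomial.X)) :
    S.eval n = x * Sg.eval (n / x) +
      ∑ r ∈ Finset.Icc 1 (d + 1),
        (F r).eval x / (Nat.factorial r : ℚ) *
          (((fdiff x)^[r - 1] f).eval n - ((fdiff x)^[r - 1] f).eval 0) / x ^ (r - 1) := by
  set G := (egf F).map (evalRingHom x)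
  have hDG : Dser.map (evalRingHom x) * G = 1 := by rw [mul_comm, ← map_mul, hF, map_one]
  have hD0 : PowerSeries.constantCoeff (Dser.map (evalRingHom x)) = 1 := by
    simp [Dser, ← PowerSeries.coeff_zero_eq_constantCoeff_apply]
  have hG0 : PowerSeries.constantCoeff G = 1 := by
    simpa [hD0] using congrArg PowerSeries.constantCoeff hDG
  set T := summationRhs x G f Sg
  have hSg' : fdiff 1 Sg = f.comp (C x * X) := by rw [fdiff, C_1, hSg]
  have hT : fdiff 1 T = f := fdiff_one_eq_of_diffQuot_eq hx hDG (N := T.natDegree + d + 1)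
    (by omega) (by omega) (diffQuot_summationRhs hx hG0 hSg' (by omega))
  have hST : S = T := eq_of_fdiff_one_eq (by rw [hT, fdiff, C_1, hS])
    (by rw [hS0, eval_summationRhs_zero _ _ _ hSg0])
  rw [hST, eval_summationRhs, hd, div_eq_inv_mul n x, ← Ico_add_one_right_eq_Icc,
    sum_Ico_eq_sum_range, add_tsub_cancel_right]
  refine congrArg _ (sum_congr rfl fun k _ => ?_)
  rw [add_tsub_cancel_left, add_comm 1 k]
  simp only [G, egf, PowerSeries.coeff_map, PowerSeries.coeff_mk, coe_evalRingHom, eval_mul,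
    eval_C]
  ring
end

section
/- For every r ∈ ℕ and every nonzero rational x, F*_r(x) = x^r · F_r(1/x). Moreover, F*_r is a polynomial of degree at most r. -/
/-- The power series `D*(z) = ∑_{r≥0} d*_r z^r` over `ℚ[x]` with
`d*_r = (∏_{j=1}^{r} (x - j))/(r+1)!`. -/
noncomputable def DstarSer : PowerSeries (Polynomial ℚ) :=
  PowerSeries.mk fun r =>
    Polynomial.C ((1 : ℚ) / (Nat.factorial (r + 1))) *
      ∏ j ∈ Finset.range r, (Polynomial.X - Polynomial.C ((j : ℚ) + 1))

/-!
Substituting `x ↦ 1/x` in `D` and rescaling `z ↦ x z` turns `D` into `D*` (coefficientwise,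
`x^r ∏ (1 - j/x) = ∏ (x - j)`). Both operations are ring homomorphisms, so they carry the inverse
`G` of `D` to the inverse `G*` of `D*`; comparing coefficients gives `F*_r(x) = x^r F_r(1/x)`.
For the degree bound, the power series over `R[X]` whose `n`-th coefficient has degree at most `n`
are stable under inversion (when the constant coefficient is `1`), by the usual recursion for the
coefficients of an inverse; `D*` is such a series.
-/

open Polynomial Nat

section DegreeFiltration

variable {R : Type*} [Ring R]

theorem PowerSeries.natDegree_coeff_le_of_mul_eq_one {A B : PowerSeries R[X]} (hAB : A * B = 1)
    (hB₀ : PowerSeries.coeff 0 B = 1) (hB : ∀ n, (PowerSeries.coeff n B).natDegree ≤ n) (n : ℕ) :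
    (PowerSeries.coeff n A).natDegree ≤ n := by
  induction n using Nat.strong_induction_on with
  | _ n ih =>
    have hcoeff := congrArg (PowerSeries.coeff n) hAB
    rw [PowerSeries.coeff_mul, PowerSeries.coeff_one] at hcoeff
    cases n with
    | zero =>
      rw [Finset.Nat.antidiagonal_zero, Finset.sum_singleton, hB₀, mul_one] at hcoeff
      simp [hcoeff]
    | succ n =>
      rw [Finset.Nat.sum_antidiagonal_succ', hB₀, mul_one, if_neg n.succ_ne_zero] at hcoeff
      rw [eq_neg_of_add_eq_zero_left hcoeff, natDegree_neg]
      refine natDegree_sum_le_of_forall_le _ _ fun p hp => natDegree_mul_le.trans ?_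
      dsimp only
      have hsum : p.1 + p.2 = n := Finset.HasAntidiagonal.mem_antidiagonal.mp hp
      have := ih p.1 (by omega)
      have := hB (p.2 + 1)
      omega

end DegreeFiltration

theorem coeff_egf (F : ℕ → ℚ[X]) (r : ℕ) :
    PowerSeries.coeff r (egf F) = C ((r ! : ℚ)⁻¹) * F r := by
  simp [egf]

theorem natDegree_coeff_egf (F : ℕ → ℚ[X]) (r : ℕ) :
    (PowerSeries.coeff r (egf F)).natDegree = (F r).natDegree := by
  rw [coeff_egf, natDegree_C_mul (by positivity)]

theorem coeff_zero_DstarSer : PowerSeries.coeff 0 DstarSer = 1 := by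
  simp [DstarSer]

theorem natDegree_coeff_DstarSer_le (r : ℕ) : (PowerSeries.coeff r DstarSer).natDegree ≤ r := by
  rw [DstarSer, PowerSeries.coeff_mk]
  refine natDegree_C_mul_le _ _ |>.trans <| (natDegree_prod_le _ _).trans ?_
  simp only [natDegree_X_sub_C, Finset.sum_const, Finset.card_range, smul_eq_mul, mul_one, le_refl]

theorem rescale_map_eval_inv_Dser {x : ℚ} (hx : x ≠ 0) :
    PowerSeries.rescale x (PowerSeries.map (evalRingHom x⁻¹) Dser) =
      PowerSeries.map (evalRingHom x) DstarSer := by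
  ext r
  simp only [Dser, DstarSer, PowerSeries.coeff_rescale, PowerSeries.coeff_map,
    PowerSeries.coeff_mk, coe_evalRingHom, eval_mul, eval_C, eval_prod, eval_sub, eval_one,
    eval_X]
  have hprod : x ^ r * ∏ j ∈ Finset.range r, (1 - ((j : ℚ) + 1) * x⁻¹) =
      ∏ j ∈ Finset.range r, (x - ((j : ℚ) + 1)) := by
    rw [show x ^ r = x ^ (Finset.range r).card by simp, Finset.pow_card_mul_prod]
    refine Finset.prod_congr rfl fun j _ => ?_
    field_simp
  rw [← hprod]
  ring

theorem eval_eq_pow_mul_eval_inv {F Fstar : ℕ → ℚ[X]} (hF : egf F * Dser = 1)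
    (hFstar : egf Fstar * DstarSer = 1) {x : ℚ} (hx : x ≠ 0) (r : ℕ) :
    (Fstar r).eval x = x ^ r * (F r).eval x⁻¹ := by
  set Φ := (PowerSeries.rescale x).comp (PowerSeries.map (evalRingHom x⁻¹))
  set Ψ := PowerSeries.map (evalRingHom x)
  have hΦ : Φ (egf F) * Ψ DstarSer = 1 := by
    rw [← rescale_map_eval_inv_Dser hx, ← RingHom.comp_apply, ← map_mul, hF, map_one]
  have hΨ : Ψ DstarSer * Ψ (egf Fstar) = 1 := by
    rw [← map_mul, mul_comm, hFstar, map_one]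
  have hinv : Φ (egf F) = Ψ (egf Fstar) := left_inv_eq_right_inv hΦ hΨ
  have hcoeff := congrArg (PowerSeries.coeff r) hinv
  simp only [Φ, Ψ, RingHom.comp_apply, PowerSeries.coeff_rescale, PowerSeries.coeff_map,
    coeff_egf, coe_evalRingHom, eval_mul, eval_C] at hcoeff
  have hfac : (r ! : ℚ)⁻¹ ≠ 0 := by positivity
  rw [mul_left_comm] at hcoeff
  exact (mul_left_cancel₀ hfac hcoeff).symm

/-- For every `r ∈ ℕ` and every nonzero rational `x`, `F*_r(x) = x^r · F_r(1/x)`;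
moreover `F*_r` has degree at most `r`. -/
theorem Fstar_eq_pow_mul_F_inv
    (F : ℕ → Polynomial ℚ) (hF : egf F * Dser = 1)
    (Fstar : ℕ → Polynomial ℚ) (hFstar : egf Fstar * DstarSer = 1) :
    (∀ (r : ℕ) (x : ℚ), x ≠ 0 → (Fstar r).eval x = x ^ r * (F r).eval (1 / x)) ∧
      ∀ r : ℕ, (Fstar r).natDegree ≤ r := by
  refine ⟨fun r x hx => ?_, fun r => ?_⟩
  · rw [one_div]
    exact eval_eq_pow_mul_eval_inv hF hFstar hx r
  · rw [← natDegree_coeff_egf]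
    exact PowerSeries.natDegree_coeff_le_of_mul_eq_one hFstar coeff_zero_DstarSer
      natDegree_coeff_DstarSer_le r
end

section
/- For every r ∈ ℕ, the polynomial F_r has degree exactly r. -/
open Finset Polynomial

namespace PowerSeries

section Diagonal

variable {R : Type*}

def CoeffNatDegreeLE [Semiring R] (f : PowerSeries R[X]) : Prop :=
  ∀ n, (coeff n f).natDegree ≤ n

noncomputable def diagonal [Semiring R] (f : PowerSeries R[X]) : PowerSeries R :=
  mk fun n => (coeff n f).coeff n

@[simp]
theorem coeff_diagonal [Semiring R] (f : PowerSeries R[X]) (n : ℕ) :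
    coeff n (diagonal f) = (coeff n f).coeff n :=
  coeff_mk _ _

@[simp]
theorem diagonal_one [Semiring R] : diagonal (1 : PowerSeries R[X]) = 1 := by
  ext n
  rcases n with _ | n <;> simp [coeff_one]

theorem diagonal_mul [Semiring R] {f g : PowerSeries R[X]} (hf : CoeffNatDegreeLE f)
    (hg : CoeffNatDegreeLE g) : diagonal (f * g) = diagonal f * diagonal g := by
  ext n
  simp only [coeff_diagonal, coeff_mul, finsetSum_coeff]
  refine sum_congr rfl fun ij hij => ?_
  rw [← mem_antidiagonal.mp hij]
  exact coeff_mul_add_eq_of_natDegree_le (hf ij.1) (hg ij.2)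

theorem CoeffNatDegreeLE.of_mul_eq_one [CommRing R] [NoZeroDivisors R] {f g : PowerSeries R[X]}
    (hfg : f * g = 1) (hg : CoeffNatDegreeLE g) : CoeffNatDegreeLE f := by
  have hconst : coeff 0 f * coeff 0 g = 1 := by simpa using congrArg (coeff 0) hfg
  have hf0 : (coeff 0 f).natDegree = 0 := natDegree_eq_zero_of_isUnit (.of_mul_eq_one _ hconst)
  intro n
  induction n using Nat.strong_induction_on with
  | _ n ih =>
    have hn := congrArg (coeff n) hfg
    rw [coeff_mul, Nat.sum_antidiagonal_eq_sum_range_succ (fun i j => coeff i f * coeff j g),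
      sum_range_succ, Nat.sub_self, ← eq_sub_iff_add_eq'] at hn
    have hlow : (∑ i ∈ range n, coeff i f * coeff (n - i) g).natDegree ≤ n :=
      natDegree_sum_le_of_forall_le _ _ fun i hi =>
        (natDegree_mul_le.trans (add_le_add (ih i (mem_range.mp hi)) (hg (n - i)))).trans
          (by have := mem_range.mp hi; omega)
    have hone : (coeff n (1 : PowerSeries R[X])).natDegree ≤ n := by
      rw [coeff_one]; split_ifs <;> simp
    calc (coeff n f).natDegree
        = (coeff n f * coeff 0 g * coeff 0 f).natDegree := by
          rw [mul_assoc, mul_comm (coeff 0 g), hconst, mul_one]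
      _ ≤ (coeff n f * coeff 0 g).natDegree := natDegree_mul_le.trans (by rw [hf0, add_zero])
      _ ≤ n := hn ▸ (natDegree_sub_le _ _).trans (max_le hone hlow)

end Diagonal

section Kaluza

variable {K : Type*} [Field K] [LinearOrder K] [IsStrictOrderedRing K]

theorem mul_lt_mul_of_sq_lt_mul {a : ℕ → K} (hpos : ∀ n, 0 < a n)
    (hlogconvex : ∀ n, a (n + 1) ^ 2 < a n * a (n + 2)) {j m : ℕ} (hjm : j < m) :
    a m * a (j + 1) < a (m + 1) * a j := by
  have hratio : StrictMono fun n => a (n + 1) / a n := strictMono_nat_of_lt_succ fun n => by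
    rw [div_lt_div_iff₀ (hpos n) (hpos (n + 1)), ← sq, mul_comm]
    exact hlogconvex n
  have := hratio hjm
  rwa [div_lt_div_iff₀ (hpos j) (hpos m), mul_comm (a (j + 1))] at this

/-- Kaluza's theorem, in its strict form. -/
theorem coeff_neg_of_mk_mul_eq_one {a : ℕ → K} {c : PowerSeries K} (hac : mk a * c = 1)
    (hpos : ∀ n, 0 < a n) (hlogconvex : ∀ n, a (n + 1) ^ 2 < a n * a (n + 2)) :
    ∀ n, 0 < n → coeff n c < 0 := by
  have hconv (n : ℕ) :
      ∑ k ∈ range (n + 1), coeff k c * a (n - k) = if n = 0 then 1 else 0 := by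
    have h := congrArg (coeff n) hac
    rw [mul_comm, coeff_mul, Nat.sum_antidiagonal_eq_sum_range_succ
      (fun i j => coeff i c * coeff j (mk a)), coeff_one] at h
    simpa using h
  intro n hn
  induction n using Nat.strong_induction_on with
  | _ n ih =>
  obtain ⟨m, rfl⟩ : ∃ m, n = m + 1 := ⟨n - 1, by omega⟩
  rcases Nat.eq_zero_or_pos m with rfl | hm0
  · have h0 := hconv 0
    have h1 := hconv 1
    simp only [sum_range_succ, sum_range_zero, zero_add, Nat.sub_self, Nat.sub_zero,
      if_true, one_ne_zero, if_false] at h0 h1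
    have hc0 : 0 < coeff 0 c := pos_of_mul_pos_left (h0 ▸ one_pos) (hpos 0).le
    nlinarith [hpos 0, hpos 1]
  have hm := hconv m
  have hm1 := hconv (m + 1)
  rw [if_neg hm0.ne'] at hm
  rw [if_neg m.succ_ne_zero, sum_range_succ, Nat.sub_self] at hm1
  -- `a m * hm1 - a (m + 1) * hm`: the terms of index `0` cancel.
  have key : a m * a 0 * coeff (m + 1) c =
      ∑ k ∈ range m, coeff (k + 1) c * (a (m + 1) * a (m - (k + 1)) - a m * a (m - k)) := by
    have hsplit :
        ∑ k ∈ range (m + 1), coeff k c * (a (m + 1) * a (m - k) - a m * a (m + 1 - k)) =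
          a (m + 1) * ∑ k ∈ range (m + 1), coeff k c * a (m - k) -
            a m * ∑ k ∈ range (m + 1), coeff k c * a (m + 1 - k) := by
      rw [mul_sum, mul_sum, ← sum_sub_distrib]
      exact sum_congr rfl fun k _ => by ring
    rw [sum_range_succ'] at hsplit
    simp only [Nat.sub_zero, Nat.reduceSubDiff] at hsplit
    linear_combination a m * hm1 - a (m + 1) * hm - hsplit
  have hneg :
      ∑ k ∈ range m, coeff (k + 1) c * (a (m + 1) * a (m - (k + 1)) - a m * a (m - k)) < 0 := by
    refine sum_neg (fun k hk => mul_neg_of_neg_of_pos (ih _ (by simp_all) k.succ_pos) ?_)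
      (nonempty_range_iff.mpr hm0.ne')
    have hkm := mem_range.mp hk
    have := mul_lt_mul_of_sq_lt_mul hpos hlogconvex (Nat.sub_lt_self k.succ_pos hkm)
    rw [show m - (k + 1) + 1 = m - k by omega] at this
    linarith
  rw [← key] at hneg
  exact neg_of_mul_neg_right hneg (mul_pos (hpos m) (hpos 0)).le

end Kaluza

end PowerSeries

namespace Polynomial

variable {R ι : Type*} [CommRing R]

theorem natDegree_one_sub_C_mul_X_le (a : R) : (1 - C a * X).natDegree ≤ 1 := by
  compute_degree

theorem natDegree_prod_one_sub_C_mul_X_le (s : Finset ι) (a : ι → R) :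
    (∏ i ∈ s, (1 - C (a i) * X)).natDegree ≤ #s :=
  (natDegree_prod_le _ _).trans <| by
    simpa using sum_le_card_nsmul s _ 1 fun i _ => natDegree_one_sub_C_mul_X_le (a i)

theorem coeff_prod_one_sub_C_mul_X_card (s : Finset ι) (a : ι → R) :
    (∏ i ∈ s, (1 - C (a i) * X)).coeff #s = ∏ i ∈ s, -a i := by
  rw [← mul_one #s,
    coeff_prod_of_natDegree_le s _ 1 fun i _ => natDegree_one_sub_C_mul_X_le (a i)]
  simp [coeff_one]

end Polynomial

open PowerSeries

theorem coeffNatDegreeLE_Dser : CoeffNatDegreeLE Dser := fun r => by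
  simpa [Dser] using (natDegree_C_mul_le _ _).trans
    (natDegree_prod_one_sub_C_mul_X_le (range r) fun j => (j : ℚ) + 1)

theorem rescale_neg_one_diagonal_Dser :
    rescale (-1) (diagonal Dser) = mk fun j => 1 / ((j : ℚ) + 1) := by
  ext r
  have := coeff_prod_one_sub_C_mul_X_card (range r) fun j => (j : ℚ) + 1
  rw [card_range] at this
  simp only [coeff_rescale, coeff_diagonal, Dser, coeff_mk, Polynomial.coeff_C_mul, this]
  have hfact : ∏ j ∈ range r, ((j : ℚ) + 1) = r.factorial := by
    exact_mod_cast prod_range_add_one_eq_factorial r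
  rw [prod_neg, card_range, hfact, Nat.factorial_succ, Nat.cast_mul]
  field_simp
  rw [← pow_mul, mul_comm r, pow_mul, neg_one_sq, one_pow, one_mul, Nat.cast_succ]

/-- For every `r ∈ ℕ`, the polynomial `F_r` has degree exactly `r`. -/
theorem F_degree_eq (F : ℕ → Polynomial ℚ) (hF : egf F * Dser = 1) :
    ∀ r : ℕ, (F r).degree = r := by
  have hbound : CoeffNatDegreeLE (egf F) := .of_mul_eq_one hF coeffNatDegreeLE_Dser
  have hinv : (mk fun j => 1 / ((j : ℚ) + 1)) * rescale (-1) (diagonal (egf F)) = 1 := by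
    rw [← rescale_neg_one_diagonal_Dser, ← map_mul,
      ← diagonal_mul coeffNatDegreeLE_Dser hbound, mul_comm, hF, diagonal_one, map_one]
  intro r
  have htop : (F r).coeff r ≠ 0 := by
    have hcoeff : coeff r (rescale (-1) (diagonal (egf F))) =
        (-1) ^ r * (1 / r.factorial * (F r).coeff r) := by
      simp [egf, coeff_rescale]
    intro h0
    rw [h0, mul_zero, mul_zero] at hcoeff
    rcases r.eq_zero_or_pos with rfl | hr
    · rw [coeff_zero_eq_constantCoeff_apply] at hcoeff
      simpa [hcoeff] using congrArg PowerSeries.constantCoeff hinv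
    · exact (coeff_neg_of_mk_mul_eq_one hinv (fun n => by positivity)
        (fun n => by push_cast; field_simp; nlinarith) r hr).ne hcoeff
  refine degree_eq_of_le_of_coeff_ne_zero (degree_le_of_natDegree_le ?_) htop
  have hdeg := hbound r
  rwa [egf, coeff_mk, natDegree_C_mul (by positivity)] at hdeg
end

section
/- For every r ∈ ℕ, F_r(1/2) = (−1)^r · r!/4^r. -/
/-!
Evaluating coefficientwise at `x = 1/2` is a ring map on power series over `ℚ[x]`. It sends `D`
to `1 + z/4`, because every `d_r` with `r ≥ 2` contains the factor `1 - 2x`. Hence it sends the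
EGF of `F` to `(1 + z/4)⁻¹ = ∑ (-1/4)^r z^r`, and comparing coefficients gives
`F_r(1/2) / r! = (-1/4)^r`.
-/

open PowerSeries

theorem PowerSeries.mk_pow_mul_one_add_C_mul_X {R : Type*} [CommRing R] (c : R) :
    mk (fun n => (-c) ^ n) * (1 + C c * X) = 1 := by
  have h := congrArg (rescale (-c)) (mk_one_mul_one_sub_eq_one R)
  simpa only [map_mul, map_sub, map_one, rescale_X, rescale_mk, Pi.one_apply, mul_one, map_neg,
    neg_mul, sub_neg_eq_add] using h

theorem PowerSeries.eq_mk_pow_of_mul_one_add_C_mul_X {R : Type*} [CommRing R] {f : R⟦X⟧}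
    {c : R} (h : f * (1 + C c * X) = 1) : f = mk fun n => (-c) ^ n :=
  left_inv_eq_right_inv h (by rw [mul_comm, mk_pow_mul_one_add_C_mul_X])

theorem eval_half_coeff_Dser_add_two (n : ℕ) :
    (coeff (n + 2) Dser).eval (1 / 2 : ℚ) = 0 := by
  have hfactor : (1 - Polynomial.C ((1 : ℚ) + 1) * Polynomial.X).eval (1 / 2) = 0 := by
    norm_num
  simp only [Dser, coeff_mk, Polynomial.eval_mul, Polynomial.eval_prod]
  rw [Finset.prod_eq_zero (i := 1) (by simp) (by exact_mod_cast hfactor), mul_zero]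

theorem map_eval_half_Dser :
    map (Polynomial.evalRingHom (1 / 2 : ℚ)) Dser = 1 + C (1 / 4) * X := by
  ext n
  rcases n with _ | _ | n
  · simp [Dser]
  · norm_num [Dser, coeff_X]
  · simpa [coeff_map, coeff_one] using eval_half_coeff_Dser_add_two n

theorem coeff_map_eval_egf (F : ℕ → Polynomial ℚ) (a : ℚ) (r : ℕ) :
    coeff r (map (Polynomial.evalRingHom a) (egf F)) = (F r).eval a / r.factorial := by
  simp [egf, coeff_map, div_eq_inv_mul]

/-- For every `r ∈ ℕ`, `F_r(1/2) = (-1)^r · r!/4^r`. -/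
theorem F_eval_half (F : ℕ → Polynomial ℚ) (hF : egf F * Dser = 1) :
    ∀ r : ℕ, (F r).eval (1 / 2) = (-1) ^ r * (Nat.factorial r : ℚ) / 4 ^ r := by
  have hgeom :
      map (Polynomial.evalRingHom (1 / 2 : ℚ)) (egf F) = mk fun n => (-(1 / 4)) ^ n := by
    apply eq_mk_pow_of_mul_one_add_C_mul_X
    rw [← map_eval_half_Dser, ← map_mul, hF, map_one]
  intro r
  have hr := congrArg (coeff r) hgeom
  rw [coeff_map_eval_egf, coeff_mk, div_eq_iff (by positivity)] at hr
  rw [hr, neg_pow, div_pow]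
  ring
end

section
/- For every integer r ≥ 1, F_r(2) = (−1)^r · (2r)! / ((1 − 2r) · r! · 2^{r+1}). -/
/-!
At `x = 2` the coefficients of `D` become `d_r(2) = (-1/2)^r · catalan r`, so `D(2)(z) = C(-z/2)`
for the Catalan series `C`. Since `C = 1 + z C²`, the inverse of `C` is `1 - z C`, hence
`F_r(2) / r! = -(-1/2)^r · catalan (r - 1)` for `r ≥ 1`, and the factorial formula for Catalan
numbers gives the closed form.
-/

open PowerSeries Finset Nat

theorem cast_catalan_eq_factorial_div {K : Type*} [Field K] [CharZero K] (n : ℕ) :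
    (catalan n : K) = (2 * n)! / ((n + 1)! * n !) := by
  have h : catalan n * ((n + 1)! * n !) = (2 * n)! := by
    rw [factorial_succ, ← mul_assoc, ← mul_assoc, mul_comm (catalan n),
      succ_mul_catalan_eq_centralBinom, centralBinom_eq_two_mul_choose, two_mul,
      ← choose_mul_factorial_mul_factorial (le_add_right n n), Nat.add_sub_cancel]
  rw [eq_div_iff (by simp [factorial_ne_zero])]
  exact_mod_cast h

theorem prod_range_one_sub_succ_mul_two {R : Type*} [CommRing R] (n : ℕ) :
    (∏ j ∈ range n, (1 - ((j : R) + 1) * 2)) * (2 ^ n * n !) = (-1) ^ n * (2 * n)! := by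
  induction n with
  | zero => simp
  | succ n ih =>
    rw [prod_range_succ, show 2 * (n + 1) = 2 * n + 1 + 1 by ring, factorial_succ (2 * n + 1),
      factorial_succ (2 * n), factorial_succ]
    push_cast
    linear_combination (2 * (n + 1) * (1 - ((n : R) + 1) * 2)) * ih

theorem one_sub_X_mul_catalanSeries_mul_self (R : Type*) [CommRing R] :
    (1 - X * map (castRingHom R) catalanSeries) * map (castRingHom R) catalanSeries = 1 := by
  have h := congrArg (map (castRingHom R)) catalanSeries_sq_mul_X_add_one
  simp only [map_add, map_mul, map_pow, map_X, map_one] at h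
  linear_combination -h

theorem map_eval_two_Dser :
    map (Polynomial.evalRingHom 2) Dser =
      rescale (-1 / 2) (map (castRingHom ℚ) catalanSeries) := by
  ext n
  have hprod := prod_range_one_sub_succ_mul_two (R := ℚ) n
  simp only [Dser, coeff_map, coeff_rescale, coeff_mk, catalanSeries_coeff, map_mul,
    Polynomial.coe_evalRingHom, Polynomial.eval_C, Polynomial.eval_prod, Polynomial.eval_sub,
    Polynomial.eval_one, Polynomial.eval_mul, Polynomial.eval_X, eq_natCast,
    cast_catalan_eq_factorial_div]
  rw [factorial_succ, div_pow, neg_pow, one_pow]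
  push_cast
  field_simp
  linear_combination hprod

theorem eval_two_div_factorial_of_egf_mul_Dser_eq_one (F : ℕ → Polynomial ℚ)
    (hF : egf F * Dser = 1) (n : ℕ) :
    (F (n + 1)).eval 2 / (n + 1)! = -((-1 / 2) ^ (n + 1) * catalan n) := by
  have hmap : map (Polynomial.evalRingHom 2) (egf F) * map (Polynomial.evalRingHom 2) Dser = 1 := by
    rw [← map_mul, hF, map_one]
  have hinv : rescale (-1 / 2 : ℚ) (1 - X * map (castRingHom ℚ) catalanSeries) *
      map (Polynomial.evalRingHom 2) Dser = 1 := by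
    rw [map_eval_two_Dser, ← map_mul, one_sub_X_mul_catalanSeries_mul_self, map_one]
  have h := congrArg (coeff (n + 1)) (left_inv_eq_right_inv hmap (by rw [mul_comm]; exact hinv))
  rw [coeff_rescale, map_sub, coeff_one, if_neg (succ_ne_zero n), coeff_succ_X_mul,
    coeff_map (castRingHom ℚ), catalanSeries_coeff, eq_natCast] at h
  simp only [egf, coeff_map, coeff_mk, map_mul, Polynomial.coe_evalRingHom, Polynomial.eval_C] at h
  rw [div_eq_mul_one_div, mul_comm, h]
  ring

/-- For every `r ≥ 1`, `F_r(2) = (-1)^r · (2r)! / ((1 - 2r) · r! · 2^{r+1})`. -/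
theorem F_eval_two (F : ℕ → Polynomial ℚ) (hF : egf F * Dser = 1) :
    ∀ r : ℕ, 1 ≤ r →
      (F r).eval 2 =
        (-1) ^ r * (Nat.factorial (2 * r) : ℚ) /
          ((1 - 2 * (r : ℚ)) * (Nat.factorial r : ℚ) * 2 ^ (r + 1)) := by
  rintro (_ | n) hr
  · omega
  have h := eval_two_div_factorial_of_egf_mul_Dser_eq_one F hF n
  rw [div_eq_iff (by positivity), cast_catalan_eq_factorial_div] at h
  have hden : 1 - 2 * ((n + 1 : ℕ) : ℚ) ≠ 0 := by
    push_cast; linarith [(n.cast_nonneg : (0 : ℚ) ≤ n)]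
  rw [h, div_pow, show 2 * (n + 1) = 2 * n + 1 + 1 by ring, factorial_succ (2 * n + 1),
    factorial_succ (2 * n), factorial_succ n]
  field_simp
  push_cast
  ring
end

section
/- For every integer r ≥ 2, F_r(−1) = 0; that is, x = −1 is a root of F_r for all r ≥ 2. Moreover, F_0(−1) = 1 and F_1(−1) = −1. -/
open Finset Nat

theorem Finset.prod_range_add_two_eq_factorial (n : ℕ) : ∏ i ∈ range n, (i + 2) = (n + 1)! := by
  rw [← prod_range_add_one_eq_factorial, prod_range_succ']
  simp

theorem map_eval_neg_one_Dser :
    PowerSeries.map (Polynomial.evalRingHom (-1)) Dser = PowerSeries.mk 1 := by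
  ext n
  have hprod : ∏ j ∈ range n, ((j : ℚ) + 2) = (n + 1)! := by
    exact_mod_cast prod_range_add_two_eq_factorial n
  simp only [Dser, PowerSeries.coeff_map, PowerSeries.coeff_mk, Polynomial.coe_evalRingHom,
    Polynomial.eval_mul, Polynomial.eval_C, Polynomial.eval_prod, Polynomial.eval_sub,
    Polynomial.eval_one, Polynomial.eval_X]
  rw [Pi.one_apply, prod_congr rfl fun (j : ℕ) _ => show 1 - ((j : ℚ) + 1) * -1 = j + 2 by ring,
    hprod, one_div_mul_cancel (by positivity)]

theorem coeff_map_egf (F : ℕ → Polynomial ℚ) (a : ℚ) (r : ℕ) :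
    PowerSeries.coeff r (PowerSeries.map (Polynomial.evalRingHom a) (egf F)) =
      (F r).eval a / r ! := by
  simp [egf, div_eq_inv_mul]

/-- `x = -1` is a root of `F_r` for all `r ≥ 2`; moreover `F_0(-1) = 1` and `F_1(-1) = -1`. -/
theorem F_eval_neg_one (F : ℕ → Polynomial ℚ) (hF : egf F * Dser = 1) :
    (∀ r : ℕ, 2 ≤ r → (F r).eval (-1) = 0) ∧
      (F 0).eval (-1) = 1 ∧ (F 1).eval (-1) = -1 := by
  set ev := PowerSeries.map (Polynomial.evalRingHom (-1 : ℚ))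
  have hgeom : ev (egf F) = 1 - PowerSeries.X := by
    have h := congrArg ev hF
    rw [map_mul, map_one, map_eval_neg_one_Dser] at h
    exact left_inv_eq_right_inv h (PowerSeries.mk_one_mul_one_sub_eq_one ℚ)
  have heval (r : ℕ) :
      (F r).eval (-1) = r ! * PowerSeries.coeff r (1 - PowerSeries.X : PowerSeries ℚ) := by
    rw [← hgeom, coeff_map_egf]
    field_simp
  refine ⟨fun r hr => ?_, ?_, ?_⟩
  · simp [heval, PowerSeries.coeff_one, PowerSeries.coeff_X, show r ≠ 0 by omega,
      show r ≠ 1 by omega]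
  · simp [heval]
  · simp [heval, PowerSeries.coeff_X]
end

section
/- For every r ∈ ℕ, the polynomial identity ∑_{k=0}^{r} binom(r,k) · (x)_{r−k} · F*_k(x) = F*_r(−x) holds in ℚ[x], where (x)_m = ∏_{j=0}^{m−1} (x − j) is the falling factorial and F*_r(−x) denotes the composition of F*_r with −x. -/
/-- The falling factorial `(x)_m = ∏_{j=0}^{m-1} (x - j)` as a polynomial in `ℚ[x]`. -/
noncomputable def fallingFact (m : ℕ) : Polynomial ℚ :=
  ∏ j ∈ Finset.range m, (Polynomial.X - Polynomial.C (j : ℚ))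

/-! Let `B(z) = ∑ (x)ₙ zⁿ/n!`, which is `(1 + z)^x`, and let `σ` be the substitution
`x ↦ -x`. Chu–Vandermonde gives `B · σB = (1 + z)^0 = 1`, and comparing coefficients gives
`B = 1 + xz·D*`, hence `σB = 1 - xz·σD*`. Therefore `xz·(B·σD*) = B·(1 - σB) = B - 1 = xz·D*`,
i.e. `B·σD* = D*`. Multiplying by `G* = 1/D*` and `σG* = 1/σD*` turns this into `B·G* = σG*`,
whose coefficient of `zʳ/r!` is the identity. -/

open Polynomial Finset Nat

local notation "σ" => compRingHom (-X : ℚ[X])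

theorem descPochhammer_smeval_eq_prod_range {R : Type*} [CommRing R] (r : R) (n : ℕ) :
    (descPochhammer ℤ n).smeval r = ∏ j ∈ range n, (r - j) := by
  rw [← aeval_eq_smeval, aeval_def, algebraMap_int_eq, ← eval_map, descPochhammer_map,
    descPochhammer_eval_eq_prod_range]

theorem PowerSeries.map_binomialSeries {R S : Type*} [CommRing R] [BinomialRing R] [CommRing S]
    [BinomialRing S] (f : R →+* S) (r : R) :
    map f (binomialSeries R r) = binomialSeries S (f r) := by
  ext n
  simp [Ring.map_choose]

theorem egf_injective : Function.Injective egf := by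
  intro F G h
  funext n
  have hn := congrArg (PowerSeries.coeff n) h
  simp only [egf, PowerSeries.coeff_mk] at hn
  refine mul_left_cancel₀ ?_ hn
  simp [Nat.factorial_ne_zero]

theorem egf_mul_egf (F G : ℕ → ℚ[X]) :
    egf F * egf G =
      egf fun n => ∑ k ∈ range (n + 1), (n.choose k : ℚ[X]) * F (n - k) * G k := by
  refine PowerSeries.ext fun n => ?_
  rw [PowerSeries.coeff_mul, ← Nat.sum_antidiagonal_swap]
  simp only [Prod.fst_swap, Prod.snd_swap]
  rw [Nat.sum_antidiagonal_eq_sum_range_succ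
      (fun i j => PowerSeries.coeff j (egf F) * PowerSeries.coeff i (egf G)), egf, egf, egf,
    PowerSeries.coeff_mk, mul_sum]
  refine sum_congr rfl fun k hk => ?_
  have hkn : k ≤ n := Nat.lt_succ_iff.mp (mem_range.mp hk)
  have hfact : (1 : ℚ) / (n - k)! * (1 / k !) = 1 / n ! * n.choose k := by
    rw [Nat.cast_choose ℚ hkn]
    field_simp
  simp only [PowerSeries.coeff_mk, ← C_eq_natCast]
  calc C (1 / ((n - k)! : ℚ)) * F (n - k) * (C (1 / (k ! : ℚ)) * G k)
      = C ((1 : ℚ) / (n - k)! * (1 / k !)) * (F (n - k) * G k) := by rw [C_mul]; ring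
    _ = C (1 / (n ! : ℚ)) * (C (n.choose k : ℚ) * F (n - k) * G k) := by
      rw [hfact, C_mul]; ring

theorem map_egf (f : ℚ[X] →+* ℚ[X]) (hf : ∀ q : ℚ, f (C q) = C q) (F : ℕ → ℚ[X]) :
    PowerSeries.map f (egf F) = egf fun n => f (F n) := by
  refine PowerSeries.ext fun n => ?_
  simp only [egf, PowerSeries.coeff_map, PowerSeries.coeff_mk, map_mul, hf]

theorem fallingFact_eq_factorial_mul_choose (n : ℕ) :
    fallingFact n = (n ! : ℚ[X]) * Ring.choose X n := by
  rw [← nsmul_eq_mul, ← Ring.descPochhammer_eq_factorial_smul_choose,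
    descPochhammer_smeval_eq_prod_range, fallingFact]
  simp

theorem fallingFact_succ (n : ℕ) :
    fallingFact (n + 1) = X * ∏ j ∈ range n, (X - C ((j : ℚ) + 1)) := by
  simp [fallingFact, prod_range_succ', mul_comm]

theorem binomialSeries_X_eq_egf_fallingFact :
    PowerSeries.binomialSeries ℚ[X] (X : ℚ[X]) = egf fallingFact := by
  refine PowerSeries.ext fun n => ?_
  rw [PowerSeries.binomialSeries_coeff, smul_eq_mul, mul_one, egf, PowerSeries.coeff_mk,
    fallingFact_eq_factorial_mul_choose, ← C_eq_natCast, ← mul_assoc, ← C_mul]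
  field_simp
  simp

theorem egf_fallingFact_mul_map_neg :
    egf fallingFact * PowerSeries.map σ (egf fallingFact) = 1 := by
  rw [← binomialSeries_X_eq_egf_fallingFact, PowerSeries.map_binomialSeries,
    ← PowerSeries.binomialSeries_add]
  simp

theorem egf_fallingFact_eq_one_add :
    egf fallingFact = 1 + PowerSeries.C X * PowerSeries.X * DstarSer := by
  refine PowerSeries.ext fun n => ?_
  cases n with
  | zero => simp [egf, fallingFact]
  | succ n =>
    rw [map_add, mul_assoc, PowerSeries.coeff_C_mul, PowerSeries.coeff_succ_X_mul,
      PowerSeries.coeff_one, if_neg n.succ_ne_zero, zero_add]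
    simp only [egf, DstarSer, PowerSeries.coeff_mk, fallingFact_succ]
    ring

theorem egf_fallingFact_mul_map_neg_DstarSer :
    egf fallingFact * PowerSeries.map σ DstarSer = DstarSer := by
  have hxz : PowerSeries.C X * PowerSeries.X ≠ (0 : PowerSeries ℚ[X]) :=
    mul_ne_zero ((map_ne_zero_iff _ PowerSeries.C_injective).mpr X_ne_zero)
      (PowerSeries.X_ne_zero (R := ℚ[X]))
  have hB := egf_fallingFact_eq_one_add
  have hσB := congrArg (PowerSeries.map σ) hB
  simp only [map_add, map_mul, map_one, PowerSeries.map_C, PowerSeries.map_X,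
    coe_compRingHom_apply, X_comp, map_neg] at hσB
  refine mul_left_cancel₀ hxz ?_
  linear_combination hB + egf fallingFact * hσB - egf_fallingFact_mul_map_neg

theorem egf_fallingFact_mul_egf {F : ℕ → ℚ[X]} (hF : egf F * DstarSer = 1) :
    egf fallingFact * egf F = PowerSeries.map σ (egf F) := by
  have hσF : PowerSeries.map σ (egf F) * PowerSeries.map σ DstarSer = 1 := by
    rw [← map_mul, hF, map_one]
  linear_combination PowerSeries.map σ (egf F) * hF - egf fallingFact * egf F * hσF +
    egf F * PowerSeries.map σ (egf F) * egf_fallingFact_mul_map_neg_DstarSer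

/-- For every `r ∈ ℕ`, `∑_{k=0}^{r} C(r,k) (x)_{r-k} F*_k(x) = F*_r(-x)` in `ℚ[x]`. -/
theorem Fstar_symmetry_identity
    (Fstar : ℕ → Polynomial ℚ) (hFstar : egf Fstar * DstarSer = 1) :
    ∀ r : ℕ,
      ∑ k ∈ Finset.range (r + 1), (r.choose k : Polynomial ℚ) * fallingFact (r - k) * Fstar k =
        (Fstar r).comp (-Polynomial.X) := by
  intro r
  have h := egf_fallingFact_mul_egf hFstar
  rw [egf_mul_egf, map_egf _ (fun q => C_comp)] at h
  exact congrFun (egf_injective h) r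
end

section
/- For every integer r ≥ 2, the polynomial F_r satisfies F_r(−x) = (−1)^r F_r(x) as an identity in ℚ[x]; that is, F_r is an even polynomial when r is even and an odd polynomial when r is odd. -/
open Finset

namespace PowerSeries

section CommRing

variable {R : Type*} [CommRing R]

theorem rescale_C (a r : R) : rescale a (C r) = C r := by
  ext n
  rcases n with _ | n <;> simp [coeff_rescale, coeff_C]

@[simp]
theorem constantCoeff_rescale (a : R) (f : R⟦X⟧) :
    constantCoeff (rescale a f) = constantCoeff f := by
  rw [← coeff_zero_eq_constantCoeff_apply, coeff_rescale, pow_zero, one_mul,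
    coeff_zero_eq_constantCoeff_apply]

theorem derivative_rescale (a : R) (f : R⟦X⟧) :
    d⁄dX R (rescale a f) = C a * rescale a (d⁄dX R f) := by
  ext n
  simp only [coeff_derivative, coeff_rescale, coeff_C_mul, pow_succ]
  ring

theorem mul_eq_one_of_one_add_C_mul_X_mul_derivative [IsAddTorsionFree R] {a : R}
    {f g : R⟦X⟧} (hf : (1 + C a * X) * d⁄dX R f = f) (hg : (1 + C a * X) * d⁄dX R g = -g)
    (hf₀ : constantCoeff f = 1) (hg₀ : constantCoeff g = 1) : f * g = 1 := by
  have hunit : IsUnit (1 + C a * X : R⟦X⟧) := isUnit_iff_constantCoeff.mpr (by simp)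
  have hderiv : d⁄dX R (f * g) = 0 := by
    refine hunit.mul_right_eq_zero.mp ?_
    rw [(d⁄dX R).leibniz, smul_eq_mul, smul_eq_mul]
    linear_combination g * hf + f * hg
  refine derivative.ext (by rw [hderiv, derivative_one]) ?_
  simp [hf₀, hg₀]

theorem apply_eq_add_X_of_mul_eq_one (σ : R⟦X⟧ →+* R⟦X⟧) {D G : R⟦X⟧}
    (hσX : σ X = -X) (hE : σ (1 + X * D) * (1 + X * D) = 1) (hG : G * D = 1) : σ G = G + X := by
  have hσG : σ G * σ D = 1 := by rw [← map_mul, hG, map_one]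
  rw [map_add, map_one, map_mul, hσX] at hE
  have hD : D - σ D = X * (σ D * D) := X_mul_cancel (by linear_combination hE)
  linear_combination σ G * G * hD + (X * σ G * σ D - σ G) * hG + (G + X) * hσG

end CommRing

section RatAlgebra

variable {R : Type*} [CommRing R] [Algebra ℚ R]

/-- The series `∑ (1/a choose r) aʳ Xʳ` of `(1 + aX)^{1/a}`, written without dividing by `a`. -/
noncomputable def powInvSeries (a : R) : R⟦X⟧ :=
  mk fun r => algebraMap ℚ R (r.factorial : ℚ)⁻¹ * ∏ j ∈ range r, (1 - j * a)

@[simp]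
theorem constantCoeff_powInvSeries (a : R) : constantCoeff (powInvSeries a) = 1 := by
  simp [powInvSeries, ← coeff_zero_eq_constantCoeff_apply]

theorem coeff_derivative_powInvSeries (a : R) (n : ℕ) :
    coeff n (d⁄dX R (powInvSeries a)) = (1 - n * a) * coeff n (powInvSeries a) := by
  have hfact : ((n + 1).factorial : ℚ)⁻¹ * (n + 1) = (n.factorial : ℚ)⁻¹ := by
    rw [Nat.factorial_succ]
    push_cast
    field_simp
  rw [coeff_derivative, powInvSeries, coeff_mk, coeff_mk, prod_range_succ, ← hfact, map_mul]
  push_cast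
  ring

theorem one_add_C_mul_X_mul_derivative_powInvSeries (a : R) :
    (1 + C a * X) * d⁄dX R (powInvSeries a) = powInvSeries a := by
  ext n
  rcases n with _ | n
  · simpa using coeff_derivative_powInvSeries a 0
  · rw [add_mul, one_mul, map_add, mul_assoc, coeff_C_mul, coeff_succ_X_mul,
      coeff_derivative_powInvSeries, coeff_derivative]
    push_cast
    ring

theorem map_powInvSeries {S : Type*} [CommRing S] [Algebra ℚ S] (φ : R →+* S) (a : R) :
    map φ (powInvSeries a) = powInvSeries (φ a) := by
  ext n
  simp [powInvSeries, map_prod, RingHom.map_rat_algebraMap]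

theorem rescale_neg_one_powInvSeries_neg_mul [IsAddTorsionFree R] (a : R) :
    rescale (-1) (powInvSeries (-a)) * powInvSeries a = 1 := by
  have hode := congrArg (rescale (-1)) (one_add_C_mul_X_mul_derivative_powInvSeries (-a))
  rw [map_mul, map_add, map_one, map_mul, rescale_neg_one_X, rescale_C] at hode
  rw [mul_comm]
  refine mul_eq_one_of_one_add_C_mul_X_mul_derivative
    (one_add_C_mul_X_mul_derivative_powInvSeries a) ?_ (by simp) (by simp)
  rw [derivative_rescale, ← hode, map_neg, map_one, map_neg]
  ring

end RatAlgebra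

end PowerSeries

open PowerSeries

theorem powInvSeries_X : powInvSeries (Polynomial.X : Polynomial ℚ) = 1 + X * Dser := by
  ext n : 1
  rcases n with _ | n
  · simp [Dser]
  · rw [map_add, coeff_succ_X_mul, powInvSeries, Dser, coeff_mk, coeff_mk, prod_range_succ',
      coeff_one]
    simp [one_div]

/-- For every `r ≥ 2`, `F_r(-x) = (-1)^r F_r(x)` in `ℚ[x]`: `F_r` has the parity of `r`. -/
theorem F_parity (F : ℕ → Polynomial ℚ) (hF : egf F * Dser = 1) :
    ∀ r : ℕ, 2 ≤ r → (F r).comp (-Polynomial.X) = (-1) ^ r * F r := by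
  let σ : (Polynomial ℚ)⟦X⟧ →+* (Polynomial ℚ)⟦X⟧ :=
    (rescale (-1)).comp (map (Polynomial.compRingHom (-Polynomial.X)))
  have hσE : σ (1 + X * Dser) * (1 + X * Dser) = 1 := by
    rw [← powInvSeries_X]
    simpa [σ, map_powInvSeries] using rescale_neg_one_powInvSeries_neg_mul Polynomial.X
  have hσG : σ (egf F) = egf F + X := apply_eq_add_X_of_mul_eq_one σ (by simp [σ]) hσE hF
  intro r hr
  have hcoeff := congrArg (coeff r) hσG
  simp only [σ, egf, RingHom.comp_apply, coeff_rescale, coeff_map, coeff_mk, map_add, coeff_X,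
    if_neg (show r ≠ 1 by omega), add_zero, map_mul, Polynomial.coe_compRingHom_apply,
    Polynomial.C_comp, mul_left_comm ((-1 : Polynomial ℚ) ^ r)] at hcoeff
  have hsign := mul_left_cancel₀ (by simp [Nat.factorial_ne_zero]) hcoeff
  conv_rhs => rw [← hsign, ← mul_assoc, ← mul_pow, neg_one_mul, neg_neg, one_pow, one_mul]
end

section
/- Let f be a polynomial with rational coefficients of degree d. Then for every rational n, S_f(n) = I_f(n) + ∑_{r=1}^{d+1} (B_r/r!) · (f^{(r−1)}(n) − f^{(r−1)}(0)), where I_f is the antiderivative of f with I_f(0) = 0 (so I_f(n) = ∫_0^n f(t) dt), f^{(r−1)} denotes the (r−1)-st derivative of f, and B_r are the Bernoulli numbers with B_1 = −1/2. (This is the Euler–Maclaurin formula for polynomials, obtained as the x → 0⁺ case of the generalized summation formula.) -/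
/-!
Let `D` be differentiation and `Δ p = p(X + 1) - p` the forward difference. On polynomials
`Δ = e^D - 1`, so the Todd operator `T = D / (e^D - 1) = ∑ (B_r / r!) D^r` satisfies
`Δ ∘ T = D`. Concretely `T (X^n)` is the Bernoulli polynomial `B_n(X)`, and
`Δ B_n = n X^(n-1)`. Hence `Δ (T I) = I' = f = Δ S`, so `S - T I` is a periodic polynomial,
i.e. a constant; evaluating at `n` and at `0` gives the formula, since
`T I = I + ∑_{r ≥ 1} (B_r / r!) f^(r-1)`.
-/

namespace Polynomial

open Finset Nat

/-- The Todd operator truncated after `D^M`, which loses nothing on polynomials of degree at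
most `M`. -/
noncomputable def todd (M : ℕ) : ℚ[X] →ₗ[ℚ] ℚ[X] :=
  ∑ r ∈ range (M + 1), (_root_.bernoulli r / r ! : ℚ) • derivative ^ r

theorem todd_apply (M : ℕ) (g : ℚ[X]) :
    todd M g = ∑ r ∈ range (M + 1), (_root_.bernoulli r / r ! : ℚ) • derivative^[r] g := by
  simp [todd, Module.End.pow_apply]

theorem todd_X_pow {M n : ℕ} (hn : n ≤ M) : todd M (X ^ n) = bernoulli n := by
  rw [todd_apply, ← sum_subset (range_subset_range.2 (succ_le_succ hn)), bernoulli]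
  · refine sum_congr rfl fun r _ => ?_
    rw [iterate_derivative_X_pow_eq_C_mul, descFactorial_eq_factorial_mul_choose,
      ← monomial_one_right_eq_X_pow, C_mul_monomial, smul_monomial]
    congr 1
    push_cast
    rw [smul_eq_mul]
    field_simp
  · intro r _ hr
    rw [iterate_derivative_eq_zero (by simp at hr ⊢; omega), smul_zero]

theorem bernoulli_comp_X_add_one_sub (n : ℕ) :
    (bernoulli n).comp (X + 1) - bernoulli n = derivative (X ^ n) :=
  Polynomial.funext fun x => by simp [add_comm x, bernoulli_eval_one_add, derivative_X_pow]

theorem todd_comp_X_add_one_sub {M : ℕ} {g : ℚ[X]} (hg : g.natDegree ≤ M) :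
    (todd M g).comp (X + 1) - todd M g = derivative g := by
  refine induction_with_natDegree_le (fun g => (todd M g).comp (X + 1) - todd M g = derivative g)
    M (by simp) (fun n a _ hn => ?_) (fun g h _ _ hg hh => ?_) g hg
  · rw [← smul_eq_C_mul, map_smul, todd_X_pow hn, smul_comp, ← smul_sub,
      bernoulli_comp_X_add_one_sub, derivative_smul]
  · rw [map_add, add_comp, derivative_add, add_sub_add_comm, hg, hh]

theorem eq_C_of_comp_X_add_one_eq {R : Type*} [CommRing R] [IsDomain R] [CharZero R] {p : R[X]}
    (h : p.comp (X + 1) = p) : p = C (p.eval 0) := by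
  have hnat (m : ℕ) : p.eval (m : R) = p.eval 0 := by
    induction m with
    | zero => simp
    | succ m ih =>
      calc p.eval ((m + 1 : ℕ) : R) = (p.comp (X + 1)).eval (m : R) := by simp
        _ = p.eval 0 := by rw [h, ih]
  rw [← sub_eq_zero]
  exact eq_zero_of_infinite_isRoot _ <|
    Set.infinite_of_injective_forall_mem cast_injective fun m => by simp [hnat m]

theorem todd_eq_add_sum_iterate_derivative {I f : ℚ[X]} (hI : derivative I = f) (M : ℕ) :
    todd (M + 1) I =
      I + ∑ r ∈ Icc 1 (M + 1), (_root_.bernoulli r / r ! : ℚ) • derivative^[r - 1] f := by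
  rw [todd_apply, sum_range_succ', ← Ico_add_one_right_eq_Icc, sum_Ico_eq_sum_range]
  simp [add_comm, ← hI, Function.iterate_succ_apply]

end Polynomial

/-- **Euler–Maclaurin formula for polynomials**: if `f` has degree `d`, `S` is the fractional
sum of `f` (the unique polynomial with `S(0) = 0` and `S(X+1) - S(X) = f(X)`), and `I` is the
antiderivative of `f` with `I(0) = 0`, then for every rational `n`,
`S(n) = I(n) + ∑_{r=1}^{d+1} (B_r/r!) (f^{(r-1)}(n) - f^{(r-1)}(0))`. -/
theorem euler_maclaurin_for_polynomials
    (f : Polynomial ℚ) (d : ℕ) (hd : f.natDegree = d)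
    (S : Polynomial ℚ) (hS0 : S.eval 0 = 0)
    (hS : S.comp (Polynomial.X + 1) - S = f)
    (I : Polynomial ℚ) (hI0 : I.eval 0 = 0) (hI : I.derivative = f)
    (n : ℚ) :
    S.eval n = I.eval n +
      ∑ r ∈ Finset.Icc 1 (d + 1),
        bernoulli r / (Nat.factorial r : ℚ) *
          ((Polynomial.derivative^[r - 1] f).eval n -
            (Polynomial.derivative^[r - 1] f).eval 0) := by
  open Polynomial in
  have hIdeg : I.natDegree ≤ d + 1 := by
    have := I.natDegree_derivative
    rw [hI, hd] at this
    omega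
  have hperiodic : (S - todd (d + 1) I).comp (X + 1) = S - todd (d + 1) I := by
    rw [sub_comp, ← sub_eq_zero, sub_sub_sub_comm, hS, todd_comp_X_add_one_sub hIdeg, hI,
      sub_self]
  have hconst := congrArg (eval n) (eq_C_of_comp_X_add_one_eq hperiodic)
  simp only [todd_eq_add_sum_iterate_derivative hI, eval_sub, eval_add, eval_C, eval_finsetSum,
    eval_smul, smul_eq_mul, hS0, hI0] at hconst
  simp only [mul_sub, Finset.sum_sub_distrib]
  linear_combination hconst
end
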